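/- For t ∈ ℝ define a(t) = (1 + 2·cos 2t)/3 and let A(t) be the real 3×3 circulant matrix with rows [a(t), a(t−π/3), a(t+π/3)], [a(t+π/3), a(t), a(t−π/3)], [a(t−π/3), a(t+π/3), a(t)]. Then A(0) = I and A(t₁)·A(t₂) = A(t₁ + t₂) for all t₁, t₂ ∈ ℝ; in particular the matrices A(t) form a one-parameter group. -/
import Mathlib


/-- a(t) = (1 + 2·cos 2t)/3. -/
noncomputable def aFun (t : ℝ) : ℝ := (1 + 2 * Real.cos (2 * t)) / 3

/-- The 3×3 circulant matrix A(t) built from a(t). -/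
noncomputable def Amat (t : ℝ) : Matrix (Fin 3) (Fin 3) ℝ :=
  !![aFun t, aFun (t - Real.pi / 3), aFun (t + Real.pi / 3);
     aFun (t + Real.pi / 3), aFun t, aFun (t - Real.pi / 3);
     aFun (t - Real.pi / 3), aFun (t + Real.pi / 3), aFun t]

lemma cos_two_pi_div_three' : Real.cos (2 * (Real.pi / 3)) = -(1/2) := by
  have h : 2 * (Real.pi / 3) = Real.pi - Real.pi / 3 := by ring
  rw [h, Real.cos_pi_sub, Real.cos_pi_div_three]

lemma sin_two_pi_div_three' : Real.sin (2 * (Real.pi / 3)) = Real.sqrt 3 / 2 := by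
  have h : 2 * (Real.pi / 3) = Real.pi - Real.pi / 3 := by ring
  rw [h, Real.sin_pi_sub, Real.sin_pi_div_three]

lemma aFun_sub (t : ℝ) :
    aFun (t - Real.pi / 3)
      = (1 - Real.cos (2*t) + Real.sqrt 3 * Real.sin (2*t)) / 3 := by
  unfold aFun
  have h : 2 * (t - Real.pi / 3) = 2*t - 2 * (Real.pi / 3) := by ring
  rw [h, Real.cos_sub, cos_two_pi_div_three', sin_two_pi_div_three']
  ring

lemma aFun_add (t : ℝ) :
    aFun (t + Real.pi / 3)
      = (1 - Real.cos (2*t) - Real.sqrt 3 * Real.sin (2*t)) / 3 := by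
  unfold aFun
  have h : 2 * (t + Real.pi / 3) = 2*t + 2 * (Real.pi / 3) := by ring
  rw [h, Real.cos_add, cos_two_pi_div_three', sin_two_pi_div_three']
  ring

/-- A(0) = I and A(t₁)·A(t₂) = A(t₁ + t₂): the matrices A(t) form a
one-parameter group. -/
theorem Amat_one_parameter_group :
    Amat 0 = 1 ∧ ∀ t₁ t₂ : ℝ, Amat t₁ * Amat t₂ = Amat (t₁ + t₂) := by
  have h3 : Real.sqrt 3 * Real.sqrt 3 = 3 :=
    Real.mul_self_sqrt (by norm_num)
  constructor
  · have h0 : aFun 0 = 1 := by unfold aFun; norm_num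
    have hs : aFun (-(Real.pi / 3)) = 0 := by
      have h := aFun_sub 0
      simpa using h.trans (by norm_num)
    have ha : aFun (Real.pi / 3) = 0 := by
      have h := aFun_add 0
      simpa using h.trans (by norm_num)
    ext i j
    fin_cases i <;> fin_cases j <;>
      simp [Amat, h0, hs, ha, Matrix.one_apply, Matrix.vecHead, Matrix.vecTail]
  · intro t₁ t₂
    have hc : Real.cos (2*(t₁+t₂)) =
        Real.cos (2*t₁) * Real.cos (2*t₂) - Real.sin (2*t₁) * Real.sin (2*t₂) := by
      have h : 2*(t₁+t₂) = 2*t₁ + 2*t₂ := by ring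
      rw [h, Real.cos_add]
    have hsin : Real.sin (2*(t₁+t₂)) =
        Real.sin (2*t₁) * Real.cos (2*t₂) + Real.cos (2*t₁) * Real.sin (2*t₂) := by
      have h : 2*(t₁+t₂) = 2*t₁ + 2*t₂ := by ring
      rw [h, Real.sin_add]
    ext i j
    fin_cases i <;> fin_cases j <;>
      simp [Amat, Matrix.mul_apply, Fin.sum_univ_three] <;>
      simp only [aFun_sub, aFun_add] <;>
      unfold aFun <;>
      simp only [hc, hsin] <;>
      first
        | linear_combination ((-2/9 : ℝ) * Real.sin (2*t₁) * Real.sin (2*t₂)) * h3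
        | linear_combination ((1/9 : ℝ) * Real.sin (2*t₁) * Real.sin (2*t₂)) * h3
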